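/- Let (X, ω) be a symplectic vector space over 𝕂 ∈ {ℝ, ℂ}, let (λ, μ) be a Fredholm pair of Lagrangian subspaces of index 0, and let V be a finite-dimensional subspace of X with V ∩ λ = V ∩ μ = {0}. Then the following four conditions are equivalent: (i) V + (V^ω ∩ λ) + μ = X; (ii) V^ω ∩ (V + λ) ∩ μ = {0}; (iii) V + λ + (V^ω ∩ μ) = X; (iv) V^ω ∩ λ ∩ (V + μ) = {0}. -/

import Mathlib

/-- The ω-annihilator of a linear subspace:
`V^ω = {x ∈ X : ω(x, y) = 0 for all y ∈ V}`. -/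
def omegaAnn {𝕂 : Type*} [Field 𝕂] {X : Type*} [AddCommGroup X] [Module 𝕂 X]
    (ω : X →ₗ[𝕂] X →ₗ[𝕂] 𝕂) (V : Submodule 𝕂 X) : Submodule 𝕂 X where
  carrier := {x | ∀ y ∈ V, ω x y = 0}
  zero_mem' := by intro y hy; simp
  add_mem' := by
    intro a b ha hb y hy
    simp only [map_add, LinearMap.add_apply, ha y hy, hb y hy, add_zero]
  smul_mem' := by
    intro c a ha y hy
    simp only [map_smul, LinearMap.smul_apply, ha y hy, smul_zero]


section Helpers

variable {𝕂 : Type*} [Field 𝕂] {X : Type*} [AddCommGroup X] [Module 𝕂 X]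
  (ω : X →ₗ[𝕂] X →ₗ[𝕂] 𝕂)

lemma mem_omegaAnn {V : Submodule 𝕂 X} {x : X} :
    x ∈ omegaAnn ω V ↔ ∀ y ∈ V, ω x y = 0 := Iff.rfl

lemma fd_of_ker_of_range {D C : Type*} [AddCommGroup D] [Module 𝕂 D]
    [AddCommGroup C] [Module 𝕂 C] (f : D →ₗ[𝕂] C)
    (h1 : FiniteDimensional 𝕂 (LinearMap.ker f))
    (h2 : FiniteDimensional 𝕂 (LinearMap.range f)) :
    FiniteDimensional 𝕂 D := by
  have e := f.quotKerEquivRange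
  have hq : FiniteDimensional 𝕂 (D ⧸ LinearMap.ker f) := e.symm.finiteDimensional
  have h3 : Module.rank 𝕂 D < Cardinal.aleph0 := by
    rw [← rank_quotient_add_rank_of_divisionRing (LinearMap.ker f)]
    exact Cardinal.add_lt_aleph0 (Module.rank_lt_aleph0 _ _) (Module.rank_lt_aleph0 _ _)
  exact Module.rank_lt_aleph0_iff.mp h3

lemma easy_step (hskew : ∀ x y, ω x y = - ω y x)
    (hnondeg : ∀ x, (∀ y, ω x y = 0) → x = 0)
    (l m V : Submodule 𝕂 X) (hl : omegaAnn ω l = l) (hm : omegaAnn ω m = m)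
    (h : V ⊔ l ⊔ (omegaAnn ω V ⊓ m) = ⊤) :
    omegaAnn ω V ⊓ l ⊓ (V ⊔ m) = ⊥ := by
  rw [eq_bot_iff]
  intro z hz
  rw [Submodule.mem_inf, Submodule.mem_inf] at hz
  obtain ⟨⟨hzV, hzl⟩, hzVm⟩ := hz
  rw [Submodule.mem_bot]
  apply hnondeg
  intro y
  have hy : y ∈ V ⊔ l ⊔ (omegaAnn ω V ⊓ m) := h ▸ Submodule.mem_top
  obtain ⟨u, hu, w, hw, rfl⟩ := Submodule.mem_sup.mp hy
  obtain ⟨v, hv, a, ha, rfl⟩ := Submodule.mem_sup.mp hu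
  rw [Submodule.mem_inf] at hw
  obtain ⟨hwV, hwm⟩ := hw
  have h1 : ω z v = 0 := hzV v hv
  have h2 : ω z a = 0 := by
    have hz' : z ∈ omegaAnn ω l := hl.symm ▸ hzl
    exact hz' a ha
  have h3 : ω z w = 0 := by
    obtain ⟨v', hv', b, hb, rfl⟩ := Submodule.mem_sup.mp hzVm
    have e1 : ω v' w = 0 := by rw [hskew]; rw [hwV v' hv']; ring
    have e2 : ω b w = 0 := by
      have hb' : b ∈ omegaAnn ω m := hm.symm ▸ hb
      exact hb' w hwm
    simp [map_add, e1, e2]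
  simp [map_add, h1, h2, h3]

end Helpers

section Hard

variable {𝕂 : Type*} [Field 𝕂] {X : Type*} [AddCommGroup X] [Module 𝕂 X]
  (ω : X →ₗ[𝕂] X →ₗ[𝕂] 𝕂)

open Module LinearMap Submodule

set_option maxHeartbeats 1000000 in
set_option synthInstance.maxHeartbeats 200000 in
lemma hard_step (hskew : ∀ x y, ω x y = - ω y x)
    (l m V : Submodule 𝕂 X) (hm : omegaAnn ω m = m)
    (hfin₁ : FiniteDimensional 𝕂 ↥(l ⊓ m))
    (hfin₂ : FiniteDimensional 𝕂 (X ⧸ (l ⊔ m)))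
    (hindex : Module.finrank 𝕂 ↥(l ⊓ m) = Module.finrank 𝕂 (X ⧸ (l ⊔ m)))
    (hVfin : FiniteDimensional 𝕂 ↥V)
    (hVl : V ⊓ l = ⊥) (hVm : V ⊓ m = ⊥) :
    omegaAnn ω V ⊓ (V ⊔ l) ⊓ m = ⊥ ↔ V ⊔ l ⊔ (omegaAnn ω V ⊓ m) = ⊤ := by
  classical
  set A : Submodule 𝕂 X := V ⊔ l with hA
  set D : Submodule 𝕂 X := A ⊓ m with hD
  have hlA : l ≤ A := le_sup_right
  have hlmD : l ⊓ m ≤ D := inf_le_inf_right m hlA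
  -- ### Step A : dimension of D
  set ψ : ↥D →ₗ[𝕂] X ⧸ l := l.mkQ.comp D.subtype with hψ
  have hker : LinearMap.ker ψ = Submodule.comap D.subtype (l ⊓ m) := by
    rw [hψ, LinearMap.ker_comp, Submodule.ker_mkQ]
    ext x
    simp only [Submodule.mem_comap, Submodule.subtype_apply, Submodule.mem_inf]
    exact ⟨fun h => ⟨h, (Submodule.mem_inf.mp x.2).2⟩, fun h => h.1⟩
  have eKer : ↥(LinearMap.ker ψ) ≃ₗ[𝕂] ↥(l ⊓ m) :=
    (LinearEquiv.ofEq _ _ hker).trans (Submodule.comapSubtypeEquivOfLe hlmD)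
  have hsup : l ⊔ D = l ⊔ (V ⊓ (l ⊔ m)) := by
    have h1 : (l ⊔ m) ⊓ A = l ⊔ m ⊓ A := sup_inf_assoc_of_le m hlA
    have h2 : (l ⊔ V) ⊓ (l ⊔ m) = l ⊔ V ⊓ (l ⊔ m) :=
      sup_inf_assoc_of_le V (le_sup_left : l ≤ l ⊔ m)
    rw [hD, inf_comm A m, ← h1, inf_comm (l ⊔ m) A, hA, sup_comm V l, h2]
  have hrange : LinearMap.range ψ = (V ⊓ (l ⊔ m)).map l.mkQ := by
    have h0 : LinearMap.range ψ = D.map l.mkQ := by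
      rw [hψ, LinearMap.range_comp, Submodule.range_subtype]
    have h2 := congrArg (Submodule.map l.mkQ) hsup
    simpa [Submodule.map_sup, Submodule.mkQ_map_self, h0] using h2
  set χ : ↥(V ⊓ (l ⊔ m)) →ₗ[𝕂] X ⧸ l := l.mkQ.comp (V ⊓ (l ⊔ m)).subtype with hχ
  have hχker : LinearMap.ker χ = ⊥ := by
    rw [hχ, LinearMap.ker_comp, Submodule.ker_mkQ, Submodule.eq_bot_iff]
    intro x hx
    rw [Submodule.mem_comap, Submodule.subtype_apply] at hx
    have hx2 : (x : X) ∈ V ⊓ l := ⟨(Submodule.mem_inf.mp x.2).1, hx⟩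
    rw [hVl, Submodule.mem_bot] at hx2
    exact Subtype.ext hx2
  have hχrange : LinearMap.range χ = (V ⊓ (l ⊔ m)).map l.mkQ := by
    rw [hχ, LinearMap.range_comp, Submodule.range_subtype]
  have eRange : ↥(LinearMap.range ψ) ≃ₗ[𝕂] ↥(V ⊓ (l ⊔ m)) :=
    ((LinearEquiv.ofInjective χ (LinearMap.ker_eq_bot.mp hχker)).trans
      (LinearEquiv.ofEq _ _ (hχrange.trans hrange.symm))).symm
  have hVlmfin : FiniteDimensional 𝕂 ↥(V ⊓ (l ⊔ m)) :=
    Submodule.finiteDimensional_of_le (inf_le_left : V ⊓ (l ⊔ m) ≤ V)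
  have hkerfin : FiniteDimensional 𝕂 ↥(LinearMap.ker ψ) := eKer.symm.finiteDimensional
  haveI := hVlmfin
  have hrangefin : FiniteDimensional 𝕂 ↥(LinearMap.range ψ) := eRange.symm.finiteDimensional
  have hDfin : FiniteDimensional 𝕂 ↥D := fd_of_ker_of_range ψ hkerfin hrangefin
  have hdimD : Module.finrank 𝕂 ↥D
      = Module.finrank 𝕂 ↥(V ⊓ (l ⊔ m)) + Module.finrank 𝕂 ↥(l ⊓ m) := by
    haveI := hDfin; haveI := hrangefin; haveI := hkerfin
    rw [← LinearMap.finrank_range_add_finrank_ker ψ, eKer.finrank_eq, eRange.finrank_eq]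
  -- ### Step B : codimension of A ⊔ m
  set π := (l ⊔ m).mkQ with hπ
  set W : Submodule 𝕂 (X ⧸ (l ⊔ m)) := V.map π with hW
  set χ₂ : ↥V →ₗ[𝕂] X ⧸ (l ⊔ m) := π.comp V.subtype with hχ₂
  have hχ₂range : LinearMap.range χ₂ = W := by
    rw [hχ₂, LinearMap.range_comp, Submodule.range_subtype, hW]
  have hχ₂ker : LinearMap.ker χ₂ = Submodule.comap V.subtype (V ⊓ (l ⊔ m)) := by
    rw [hχ₂, LinearMap.ker_comp, hπ, Submodule.ker_mkQ]
    ext x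
    simp only [Submodule.mem_comap, Submodule.subtype_apply, Submodule.mem_inf]
    exact ⟨fun h => ⟨x.2, h⟩, fun h => h.2⟩
  have eKer₂ : ↥(LinearMap.ker χ₂) ≃ₗ[𝕂] ↥(V ⊓ (l ⊔ m)) :=
    (LinearEquiv.ofEq _ _ hχ₂ker).trans
      (Submodule.comapSubtypeEquivOfLe (inf_le_left : V ⊓ (l ⊔ m) ≤ V))
  have hWr : Module.finrank 𝕂 ↥W + Module.finrank 𝕂 ↥(V ⊓ (l ⊔ m))
      = Module.finrank 𝕂 ↥V := by
    rw [← LinearMap.finrank_range_add_finrank_ker χ₂, eKer₂.finrank_eq, hχ₂range]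
  have hAmle : l ⊔ m ≤ A ⊔ m := sup_le_sup_right hlA m
  have hmapAm : (A ⊔ m).map π = W := by
    have h1 : A ⊔ m = V ⊔ (l ⊔ m) := by rw [hA, sup_assoc]
    rw [h1, Submodule.map_sup, hπ, Submodule.mkQ_map_self, hW, sup_bot_eq]
  have e2 := Submodule.quotientQuotientEquivQuotient (l ⊔ m) (A ⊔ m) hAmle
  rw [hmapAm] at e2
  -- e2 : ((X ⧸ (l ⊔ m)) ⧸ W) ≃ₗ[𝕂] X ⧸ (A ⊔ m)
  have hfinQ : FiniteDimensional 𝕂 (X ⧸ (A ⊔ m)) := e2.finiteDimensional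
  have hcW : Module.finrank 𝕂 (X ⧸ (A ⊔ m)) + Module.finrank 𝕂 ↥W
      = Module.finrank 𝕂 (X ⧸ (l ⊔ m)) := by
    rw [← e2.finrank_eq, Submodule.finrank_quotient_add_finrank W]
  have key : Module.finrank 𝕂 ↥D
      = Module.finrank 𝕂 ↥V + Module.finrank 𝕂 (X ⧸ (A ⊔ m)) := by omega
  -- ### Step C : the two pairing maps
  set G : X →ₗ[𝕂] Module.Dual 𝕂 ↥V := V.subtype.dualMap.comp ω with hG
  set g : ↥m →ₗ[𝕂] Module.Dual 𝕂 ↥V := G.comp m.subtype with hg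
  set f : ↥D →ₗ[𝕂] Module.Dual 𝕂 ↥V := G.comp D.subtype with hf
  have hgapp : ∀ (b : ↥m) (v : ↥V), g b v = ω (b : X) (v : X) := fun _ _ => rfl
  have hfapp : ∀ (x : ↥D) (v : ↥V), f x v = ω (x : X) (v : X) := fun _ _ => rfl
  haveI := hVfin
  have hgsurj : Function.Surjective g := by
    rw [← LinearMap.range_eq_top]
    have hann : (LinearMap.range g).dualCoannihilator = ⊥ := by
      rw [Submodule.eq_bot_iff]
      intro v hv
      rw [Submodule.mem_dualCoannihilator] at hv
      have hvm : (v : X) ∈ omegaAnn ω m := by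
        intro y hy
        have h0 := hv (g ⟨y, hy⟩) (LinearMap.mem_range_self g ⟨y, hy⟩)
        rw [hgapp] at h0
        rw [hskew, h0, neg_zero]
      have hvVm : (v : X) ∈ V ⊓ m := ⟨v.2, hm ▸ hvm⟩
      rw [hVm, Submodule.mem_bot] at hvVm
      exact Subtype.ext hvVm
    have hfr := Subspace.finrank_add_finrank_dualCoannihilator_eq (LinearMap.range g)
    rw [hann, finrank_bot, add_zero] at hfr
    exact Submodule.eq_top_of_finrank_eq (by rw [hfr, Subspace.dual_finrank_eq])
  have hker_iff : omegaAnn ω V ⊓ A ⊓ m = ⊥ ↔ LinearMap.ker f = ⊥ := by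
    constructor
    · intro h
      rw [Submodule.eq_bot_iff]
      intro x hx
      rw [LinearMap.mem_ker] at hx
      have hxann : (x : X) ∈ omegaAnn ω V := by
        intro y hy
        have h0 := congrArg (fun φ => φ ⟨y, hy⟩) hx
        simpa [hfapp] using h0
      have hx3 : (x : X) ∈ omegaAnn ω V ⊓ A ⊓ m :=
        ⟨⟨hxann, (Submodule.mem_inf.mp x.2).1⟩, (Submodule.mem_inf.mp x.2).2⟩
      rw [h, Submodule.mem_bot] at hx3
      exact Subtype.ext hx3
    · intro h
      rw [Submodule.eq_bot_iff]
      intro z hz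
      rw [Submodule.mem_inf, Submodule.mem_inf] at hz
      obtain ⟨⟨hz1, hz2⟩, hz3⟩ := hz
      set x : ↥D := ⟨z, Submodule.mem_inf.mpr ⟨hz2, hz3⟩⟩ with hx
      have hfx : f x = 0 := by
        ext v
        simpa [hfapp] using hz1 (v : X) v.2
      rw [← LinearMap.mem_ker, h, Submodule.mem_bot] at hfx
      exact Submodule.mem_bot 𝕂 |>.mpr (congrArg Subtype.val hfx)
  have hsurj_iff : Function.Surjective f ↔ m ≤ D ⊔ (omegaAnn ω V ⊓ m) := by
    constructor
    · intro hs b hb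
      obtain ⟨x, hx⟩ := hs (g ⟨b, hb⟩)
      refine Submodule.mem_sup.mpr ⟨(x : X), x.2, b - x,
        Submodule.mem_inf.mpr ⟨?_, Submodule.sub_mem m hb (Submodule.mem_inf.mp x.2).2⟩, by abel⟩
      intro y hy
      have h0 := congrArg (fun φ => φ ⟨y, hy⟩) hx
      simp only [hfapp, hgapp] at h0
      rw [map_sub, LinearMap.sub_apply, h0, sub_self]
    · intro hle φ
      obtain ⟨b, hb⟩ := hgsurj φ
      obtain ⟨x, hx, z, hz, hxz⟩ := Submodule.mem_sup.mp (hle b.2)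
      rw [Submodule.mem_inf] at hz
      refine ⟨⟨x, hx⟩, ?_⟩
      ext v
      have h1 : ω (b : X) (v : X) = φ v := by rw [← hgapp b v, hb]
      have h2 : ω z (v : X) = 0 := hz.1 (v : X) v.2
      have h3 : ω (b : X) (v : X) = ω x (v : X) + ω z (v : X) := by
        rw [← hxz]; simp [map_add]
      rw [hfapp, ← h1, h3, h2, add_zero]
  haveI := hDfin
  haveI := hfinQ
  constructor
  · intro h2
    have hkf : LinearMap.ker f = ⊥ := hker_iff.mp h2
    have hinj : Function.Injective f := LinearMap.ker_eq_bot.mp hkf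
    have hle : Module.finrank 𝕂 ↥D ≤ Module.finrank 𝕂 (Module.Dual 𝕂 ↥V) :=
      LinearMap.finrank_le_finrank_of_injective hinj
    rw [Subspace.dual_finrank_eq] at hle
    have hc0 : Module.finrank 𝕂 (X ⧸ (A ⊔ m)) = 0 := by omega
    have htop : A ⊔ m = ⊤ := by
      have hsub : Subsingleton (X ⧸ (A ⊔ m)) := Module.finrank_zero_iff.mp hc0
      exact Submodule.Quotient.subsingleton_iff.mp hsub
    have hfr : Module.finrank 𝕂 ↥D = Module.finrank 𝕂 (Module.Dual 𝕂 ↥V) := by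
      rw [Subspace.dual_finrank_eq]; omega
    have hfsurj : Function.Surjective f :=
      (LinearMap.injective_iff_surjective_of_finrank_eq_finrank hfr).mp hinj
    have hmle : m ≤ D ⊔ (omegaAnn ω V ⊓ m) := hsurj_iff.mp hfsurj
    rw [eq_top_iff, ← htop]
    exact sup_le le_sup_left (le_trans hmle (sup_le_sup_right inf_le_left _))
  · intro h3
    have htop : A ⊔ m = ⊤ := by
      rw [eq_top_iff, ← h3]
      exact sup_le_sup_left inf_le_right A
    have hmle : m ≤ D ⊔ (omegaAnn ω V ⊓ m) := by
      have hmod := sup_inf_assoc_of_le (x := omegaAnn ω V ⊓ m) A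
        (inf_le_right : omegaAnn ω V ⊓ m ≤ m)
      have h4 : (omegaAnn ω V ⊓ m) ⊔ A = ⊤ := by rw [sup_comm]; exact h3
      rw [h4, top_inf_eq] at hmod
      rw [hD]
      exact hmod.le.trans (le_of_eq (sup_comm _ _))
    have hfsurj : Function.Surjective f := hsurj_iff.mpr hmle
    have hc0 : Module.finrank 𝕂 (X ⧸ (A ⊔ m)) = 0 := by
      haveI : Subsingleton (X ⧸ (A ⊔ m)) :=
        Submodule.Quotient.subsingleton_iff.mpr htop
      exact Module.finrank_zero_of_subsingleton
    have hfr : Module.finrank 𝕂 ↥D = Module.finrank 𝕂 (Module.Dual 𝕂 ↥V) := by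
      rw [Subspace.dual_finrank_eq]; omega
    have hinj : Function.Injective f :=
      (LinearMap.injective_iff_surjective_of_finrank_eq_finrank hfr).mpr hfsurj
    exact hker_iff.mpr (LinearMap.ker_eq_bot.mpr hinj)


end Hard


/-- Let `(X, ω)` be a symplectic vector space over `𝕂 ∈ {ℝ, ℂ}`, `(l, m)` a Fredholm pair of
Lagrangian subspaces of index `0`, and `V` a finite-dimensional subspace with
`V ∩ l = V ∩ m = {0}`. Then the following are equivalent:
(i) `V + (V^ω ∩ l) + m = X`; (ii) `V^ω ∩ (V + l) ∩ m = {0}`;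
(iii) `V + l + (V^ω ∩ m) = X`; (iv) `V^ω ∩ l ∩ (V + m) = {0}`. -/
theorem equivalent_conditions
    {𝕂 : Type*} [RCLike 𝕂] {X : Type*} [AddCommGroup X] [Module 𝕂 X]
    (ω : X →ₗ[𝕂] X →ₗ[𝕂] 𝕂)
    (hskew : ∀ x y, ω x y = - ω y x)
    (hnondeg : ∀ x, (∀ y, ω x y = 0) → x = 0)
    (l m : Submodule 𝕂 X)
    (hl : omegaAnn ω l = l) (hm : omegaAnn ω m = m)
    (hfin₁ : FiniteDimensional 𝕂 ↥(l ⊓ m))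
    (hfin₂ : FiniteDimensional 𝕂 (X ⧸ (l ⊔ m)))
    (hindex : Module.finrank 𝕂 ↥(l ⊓ m) = Module.finrank 𝕂 (X ⧸ (l ⊔ m)))
    (V : Submodule 𝕂 X) (hVfin : FiniteDimensional 𝕂 ↥V)
    (hVl : V ⊓ l = ⊥) (hVm : V ⊓ m = ⊥) :
    (V ⊔ (omegaAnn ω V ⊓ l) ⊔ m = ⊤ ↔ omegaAnn ω V ⊓ (V ⊔ l) ⊓ m = ⊥)
      ∧ (omegaAnn ω V ⊓ (V ⊔ l) ⊓ m = ⊥ ↔ V ⊔ l ⊔ (omegaAnn ω V ⊓ m) = ⊤)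
      ∧ (V ⊔ l ⊔ (omegaAnn ω V ⊓ m) = ⊤ ↔ omegaAnn ω V ⊓ l ⊓ (V ⊔ m) = ⊥) := by
  have hfin₁' : FiniteDimensional 𝕂 ↥(m ⊓ l) := by rw [inf_comm m l]; exact hfin₁
  have hfin₂' : FiniteDimensional 𝕂 (X ⧸ (m ⊔ l)) := by rw [sup_comm m l]; exact hfin₂
  have hindex' : Module.finrank 𝕂 ↥(m ⊓ l) = Module.finrank 𝕂 (X ⧸ (m ⊔ l)) := by
    rw [inf_comm m l, sup_comm m l]; exact hindex
  have H1 := hard_step ω hskew l m V hm hfin₁ hfin₂ hindex hVfin hVl hVm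
  have H2 := hard_step ω hskew m l V hl hfin₁' hfin₂' hindex' hVfin hVm hVl
  have E1 := easy_step ω hskew hnondeg m l V hm hl
  have E2 := easy_step ω hskew hnondeg l m V hl hm
  have i12 : V ⊔ (omegaAnn ω V ⊓ l) ⊔ m = ⊤ → omegaAnn ω V ⊓ (V ⊔ l) ⊓ m = ⊥ := by
    intro h
    rw [inf_right_comm]
    exact E1 (by rw [sup_right_comm] at h; exact h)
  have i41 : omegaAnn ω V ⊓ l ⊓ (V ⊔ m) = ⊥ → V ⊔ (omegaAnn ω V ⊓ l) ⊔ m = ⊤ := by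
    intro h
    rw [sup_right_comm]
    exact H2.mp (by rw [inf_right_comm] at h; exact h)
  refine ⟨⟨i12, fun h2 => i41 (E2 (H1.mp h2))⟩, H1, ⟨E2, fun h4 => H1.mp (i12 (i41 h4))⟩⟩
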